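/- Let T ∈ ℂ^{n×n} and let Y, K be Hermitian n×n matrices. If C_T(Y) ≥ K in the Loewner order, then Y − T̂^H Y T̂ ≥ K + T^H K̄ T, where T̂ := T̄T and C_T(Y) := Y − T^H Ȳ T. -/
import Mathlib


open Matrix Filter Topology
open scoped ComplexOrder

noncomputable section

namespace CDARE

variable {n m : ℕ}

/-- Entrywise complex conjugate of a matrix. -/
def mconj {p q : ℕ} (M : Matrix (Fin p) (Fin q) ℂ) : Matrix (Fin p) (Fin q) ℂ :=
  M.map (starRingEnd ℂ)

/-- `hatM M = conj M * M`. -/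
def hatM (M : Matrix (Fin n) (Fin n) ℂ) : Matrix (Fin n) (Fin n) ℂ := mconj M * M

/-- `R_X = R + Bᴴ X̄ B`. -/
def RX (R : Matrix (Fin m) (Fin m) ℂ) (B : Matrix (Fin n) (Fin m) ℂ)
    (X : Matrix (Fin n) (Fin n) ℂ) : Matrix (Fin m) (Fin m) ℂ :=
  R + Bᴴ * mconj X * B

/-- `F_X = R_X⁻¹ Bᴴ X̄ A`. -/
def FX (A : Matrix (Fin n) (Fin n) ℂ) (B : Matrix (Fin n) (Fin m) ℂ)
    (R : Matrix (Fin m) (Fin m) ℂ) (X : Matrix (Fin n) (Fin n) ℂ) :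
    Matrix (Fin m) (Fin n) ℂ :=
  (RX R B X)⁻¹ * (Bᴴ * mconj X * A)

/-- `T_X = A - B F_X`. -/
def TX (A : Matrix (Fin n) (Fin n) ℂ) (B : Matrix (Fin n) (Fin m) ℂ)
    (R : Matrix (Fin m) (Fin m) ℂ) (X : Matrix (Fin n) (Fin n) ℂ) :
    Matrix (Fin n) (Fin n) ℂ :=
  A - B * FX A B R X

/-- The Riccati operator `R(X)`. -/
def Rop (A : Matrix (Fin n) (Fin n) ℂ) (B : Matrix (Fin n) (Fin m) ℂ)
    (R : Matrix (Fin m) (Fin m) ℂ) (H : Matrix (Fin n) (Fin n) ℂ)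
    (X : Matrix (Fin n) (Fin n) ℂ) : Matrix (Fin n) (Fin n) ℂ :=
  Aᴴ * mconj X * A - Aᴴ * mconj X * B * (RX R B X)⁻¹ * (Bᴴ * mconj X * A) + H

/-- `H_X = H + F_Xᴴ R F_X`. -/
def HX (A : Matrix (Fin n) (Fin n) ℂ) (B : Matrix (Fin n) (Fin m) ℂ)
    (R : Matrix (Fin m) (Fin m) ℂ) (H : Matrix (Fin n) (Fin n) ℂ)
    (X : Matrix (Fin n) (Fin n) ℂ) : Matrix (Fin n) (Fin n) ℂ :=
  H + (FX A B R X)ᴴ * R * FX A B R X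

/-- `K(Y, X) = (F_Y - F_X)ᴴ R_X (F_Y - F_X)`. -/
def Kop (A : Matrix (Fin n) (Fin n) ℂ) (B : Matrix (Fin n) (Fin m) ℂ)
    (R : Matrix (Fin m) (Fin m) ℂ) (Y X : Matrix (Fin n) (Fin n) ℂ) :
    Matrix (Fin n) (Fin n) ℂ :=
  (FX A B R Y - FX A B R X)ᴴ * RX R B X * (FX A B R Y - FX A B R X)

/-- Conjugate Stein operator `C_C(X) = X - Cᴴ X̄ C`. -/
def CStein (C X : Matrix (Fin n) (Fin n) ℂ) : Matrix (Fin n) (Fin n) ℂ :=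
  X - Cᴴ * mconj X * C

/-- The set `S_≥`. -/
def Sge (A : Matrix (Fin n) (Fin n) ℂ) (B : Matrix (Fin n) (Fin m) ℂ)
    (R : Matrix (Fin m) (Fin m) ℂ) (H : Matrix (Fin n) (Fin n) ℂ) :
    Set (Matrix (Fin n) (Fin n) ℂ) :=
  {X | X.IsHermitian ∧ ∃ XT : Matrix (Fin n) (Fin n) ℂ, XT.IsHermitian ∧
      IsUnit (RX R B XT) ∧ spectralRadius ℂ (hatM (TX A B R XT)) < 1 ∧
      (CStein (TX A B R XT) X - HX A B R H XT).PosSemidef}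


section AuxMconj

variable {p q r : ℕ}

lemma mconj_mul (A : Matrix (Fin p) (Fin q) ℂ) (B : Matrix (Fin q) (Fin r) ℂ) :
    mconj (A * B) = mconj A * mconj B := Matrix.map_mul

lemma mconj_sub (A B : Matrix (Fin p) (Fin q) ℂ) :
    mconj (A - B) = mconj A - mconj B :=
  Matrix.map_sub _ (fun _ _ => by simp) _ _

lemma mconj_mconj (A : Matrix (Fin p) (Fin q) ℂ) : mconj (mconj A) = A := by
  ext i j; simp [mconj]

lemma mconj_conjTranspose (A : Matrix (Fin p) (Fin q) ℂ) : mconj (Aᴴ) = Aᵀ := by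
  ext i j; simp [mconj]

lemma conjTranspose_mconj (A : Matrix (Fin p) (Fin q) ℂ) : (mconj A)ᴴ = Aᵀ := by
  ext i j; simp [mconj]

end AuxMconj

/-- If `C_T(Y) ≥ K` then `Y - T̂ᴴ Y T̂ ≥ K + Tᴴ K̄ T`, where `T̂ = T̄ T`. -/
theorem cstein_ineq_implies_stein_ineq
    (n : ℕ) (T Y K : Matrix (Fin n) (Fin n) ℂ)
    (hY : Y.IsHermitian) (hK : K.IsHermitian)
    (h : (CStein T Y - K).PosSemidef) :
    ((Y - (hatM T)ᴴ * Y * hatM T) - (K + Tᴴ * mconj K * T)).PosSemidef := by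
  have hDherm : (CStein T Y - K)ᴴ = CStein T Y - K := h.1
  have hmc : mconj (CStein T Y - K) = (CStein T Y - K)ᵀ := by
    ext i j
    have := congrFun (congrFun hDherm j) i
    simpa [Matrix.conjTranspose_apply, mconj] using this
  have key : (Y - (hatM T)ᴴ * Y * hatM T) - (K + Tᴴ * mconj K * T)
      = (CStein T Y - K) + Tᴴ * mconj (CStein T Y - K) * T := by
    simp only [CStein, hatM, mconj_sub, mconj_mul, mconj_mconj, mconj_conjTranspose,
      Matrix.conjTranspose_mul, conjTranspose_mconj]
    simp only [Matrix.mul_sub, Matrix.sub_mul, Matrix.mul_assoc]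
    abel
  rw [key, hmc]
  exact h.add (h.transpose.conjTranspose_mul_mul_same T)


end CDARE
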